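/- Let n ∈ ℕ with 5 ≤ n ≤ 9, and set a := √((n−2)/8) and b := 3(n−2) − (1/√2)(n+2)√(n−2). Then b ≥ 0, and the function η(r,t) := r²/(a·r² − b·t), defined for r > 0 and t < 0, satisfies ∂ₜη(r,t) = ∂ᵣ∂ᵣη(r,t) + (n−3)·(∂ᵣη(r,t))/r − (n−2)·η(r,t)(η(r,t)−1)(η(r,t)−2)/r² for all r > 0 and t < 0; moreover η is self-similar: η(r,t) = η(r/√(−t), −1) for all r > 0, t < 0. -/

import Mathlib

open MeasureTheory Real Filter Matrix
open scoped ENNReal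

noncomputable section

namespace YM

variable {n m : ℕ}

/-- A connection on the trivial bundle `ℝⁿ × ℝᵐ`, given by its coefficient
matrices `Γ₁(x), …, Γₙ(x)`. -/
abbrev Conn (n m : ℕ) :=
  (Fin n → ℝ) → Fin n → Matrix (Fin m) (Fin m) ℝ

/-- Entrywise `i`-th partial derivative of a matrix-valued map on `ℝⁿ`. -/
def pder (i : Fin n) (A : (Fin n → ℝ) → Matrix (Fin m) (Fin m) ℝ)
    (x : Fin n → ℝ) : Matrix (Fin m) (Fin m) ℝ :=
  Matrix.of fun a b => fderiv ℝ (fun y => A y a b) x (Pi.single i 1)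

/-- Smoothness (entrywise) of a matrix-valued map on `ℝⁿ`. -/
def SmoothMat (A : (Fin n → ℝ) → Matrix (Fin m) (Fin m) ℝ) : Prop :=
  ∀ a b, ContDiff ℝ (⊤ : ℕ∞) fun y => A y a b

/-- Smoothness of a connection. -/
def Smooth (Γ : Conn n m) : Prop :=
  ∀ i, SmoothMat fun x => Γ x i

/-- Matrix commutator. -/
def comm (A B : Matrix (Fin m) (Fin m) ℝ) : Matrix (Fin m) (Fin m) ℝ :=
  A * B - B * A

/-- Curvature `F_{ij} = ∂ᵢΓⱼ − ∂ⱼΓᵢ + [Γᵢ, Γⱼ]`. -/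
def curv (Γ : Conn n m) (i j : Fin n) (x : Fin n → ℝ) :
    Matrix (Fin m) (Fin m) ℝ :=
  pder i (fun y => Γ y j) x - pder j (fun y => Γ y i) x + comm (Γ x i) (Γ x j)

/-- Covariant derivative `∇ᵢA = ∂ᵢA + [Γᵢ, A]`. -/
def covDer (Γ : Conn n m) (i : Fin n)
    (A : (Fin n → ℝ) → Matrix (Fin m) (Fin m) ℝ) (x : Fin n → ℝ) :
    Matrix (Fin m) (Fin m) ℝ :=
  pder i A x + comm (Γ x i) (A x)

/-- `(D*F)ₖ = −Σᵢ ∇ᵢF_{ik}`. -/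
def dstarF (Γ : Conn n m) (k : Fin n) (x : Fin n → ℝ) :
    Matrix (Fin m) (Fin m) ℝ :=
  - ∑ i, covDer Γ i (fun y => curv Γ i k y) x

/-- Squared Frobenius norm of a matrix. -/
def frobSq (A : Matrix (Fin m) (Fin m) ℝ) : ℝ := ∑ a, ∑ b, (A a b) ^ 2

/-- Frobenius norm of a matrix. -/
def frobNorm (A : Matrix (Fin m) (Fin m) ℝ) : ℝ := Real.sqrt (frobSq A)

/-- Frobenius inner product `⟨A, B⟩ = tr(A Bᵀ)`. -/
def frobInner (A B : Matrix (Fin m) (Fin m) ℝ) : ℝ := ∑ a, ∑ b, A a b * B a b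

/-- `|F(x)|² = Σ_{i,j} ‖F_{ij}(x)‖²` (Frobenius norms). -/
def normSqF (Γ : Conn n m) (x : Fin n → ℝ) : ℝ :=
  ∑ i, ∑ j, frobSq (curv Γ i j x)

/-- `|F(x)|`. -/
def normF (Γ : Conn n m) (x : Fin n → ℝ) : ℝ := Real.sqrt (normSqF Γ x)

/-- Euclidean norm on `ℝⁿ`. -/
def enorm (x : Fin n → ℝ) : ℝ := Real.sqrt (∑ i, x i ^ 2)

/-- Metric compatibility: all coefficient matrices are skew-symmetric. -/
def MetricCompat (Γ : Conn n m) : Prop :=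
  ∀ x i, (Γ x i)ᵀ = -(Γ x i)

/-- `(x₀,t₀)`-soliton: `Σᵢ ∇ᵢF_{ik} = (1/(2t₀)) Σᵢ (x−x₀)ᵢ F_{ik}`. -/
def IsSolitonAt (Γ : Conn n m) (x₀ : Fin n → ℝ) (t₀ : ℝ) : Prop :=
  ∀ (x : Fin n → ℝ) (k : Fin n),
    ∑ i, covDer Γ i (fun y => curv Γ i k y) x
      = (1 / (2 * t₀)) • ∑ i, (x i - x₀ i) • curv Γ i k x

/-- `(0,1)`-soliton. -/
def IsSoliton (Γ : Conn n m) : Prop := IsSolitonAt Γ 0 1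

/-- The `ℱ`-functional
`ℱ_{x₀,t₀}(Γ) = t₀² (4πt₀)^{−n/2} ∫ |F|² e^{−|x−x₀|²/(4t₀)}`. -/
def Ffunc (Γ : Conn n m) (x₀ : Fin n → ℝ) (t₀ : ℝ) : ℝ :=
  t₀ ^ 2 * (4 * π * t₀) ^ (-(n : ℝ) / 2) *
    ∫ x : Fin n → ℝ,
      normSqF Γ x * Real.exp (-(∑ i, (x i - x₀ i) ^ 2) / (4 * t₀))

/-- The entropy `λ(Γ) = sup_{x₀, t₀>0} ℱ_{x₀,t₀}(Γ)`, valued in `[0,∞]`. -/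
def entropy (Γ : Conn n m) : ℝ≥0∞ :=
  ⨆ (x₀ : Fin n → ℝ) (t₀ : ℝ) (_ : 0 < t₀), ENNReal.ofReal (Ffunc Γ x₀ t₀)

/-- Polynomial curvature growth: `|F(x)| ≤ p(|x|)`. -/
def PolyCurvGrowth (Γ : Conn n m) : Prop :=
  ∃ p : Polynomial ℝ, ∀ x, normF Γ x ≤ p.eval (enorm x)

/-- Polynomial curvature growth to order two. -/
def PolyCurvGrowth2 (Γ : Conn n m) : Prop :=
  ∃ p : Polynomial ℝ, ∀ x,
    normF Γ x
      + (∑ i, ∑ j, ∑ k, frobNorm (covDer Γ i (fun y => curv Γ j k y) x))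
      + (∑ i, ∑ j, ∑ k, ∑ l,
          frobNorm (covDer Γ i
            (fun y => covDer Γ j (fun z => curv Γ k l z) y) x))
      ≤ p.eval (enorm x)

/-- Cylindrical: some nonzero constant vector `V` satisfies `V ⌟ F ≡ 0`. -/
def Cylindrical (Γ : Conn n m) : Prop :=
  ∃ V : Fin n → ℝ, V ≠ 0 ∧
    ∀ (x : Fin n → ℝ) (k : Fin n), ∑ i, V i • curv Γ i k x = 0

/-- `(DB)_{ij} = ∇ᵢBⱼ − ∇ⱼBᵢ`. -/
def Dop (Γ B : Conn n m) (i j : Fin n) (x : Fin n → ℝ) :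
    Matrix (Fin m) (Fin m) ℝ :=
  covDer Γ i (fun y => B y j) x - covDer Γ j (fun y => B y i) x

/-- The second variation operator
`(L_{x₀,t₀}B)ₖ = −Σᵢ∇ᵢ(DB)_{ik} + (1/(2t₀))Σᵢ(x−x₀)ᵢ(DB)_{ik} + Σᵢ[Bᵢ,F_{ik}]`. -/
def Lop (Γ B : Conn n m) (x₀ : Fin n → ℝ) (t₀ : ℝ) (k : Fin n)
    (x : Fin n → ℝ) : Matrix (Fin m) (Fin m) ℝ :=
  (- ∑ i, covDer Γ i (fun y => Dop Γ B i k y) x)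
    + (1 / (2 * t₀)) • ∑ i, (x i - x₀ i) • Dop Γ B i k x
    + ∑ i, comm (B x i) (curv Γ i k x)

/-- The Gaussian weight `G(x) = (4π)^{−n/2} e^{−|x|²/4}`. -/
def gaussG (n : ℕ) (x : Fin n → ℝ) : ℝ :=
  (4 * π) ^ (-(n : ℝ) / 2) * Real.exp (-(∑ i, x i ^ 2) / 4)

/-- The second variation form `Q(σ,V,B)` of a `(0,1)`-soliton. -/
def Q (Γ : Conn n m) (σ : ℝ) (V : Fin n → ℝ) (B : Conn n m) : ℝ :=
  -4 * σ ^ 2 * (∫ x : Fin n → ℝ, (∑ k, frobSq (dstarF Γ k x)) * gaussG n x)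
    - 2 * (∫ x : Fin n → ℝ,
        (∑ k, frobSq (∑ i, V i • curv Γ i k x)) * gaussG n x)
    + 4 * (∫ x : Fin n → ℝ,
        (∑ k, frobInner (B x k) (Lop Γ B 0 1 k x)) * gaussG n x)
    - 4 * (∫ x : Fin n → ℝ,
        (∑ k, frobInner (B x k)
          (∑ i, (σ * x i + V i) • curv Γ i k x)) * gaussG n x)

/-- Skew-symmetric-matrix-valued 1-form. -/
def SkewVals (B : Conn n m) : Prop := ∀ x i, (B x i)ᵀ = -(B x i)

/-- `ℱ`-instability. -/
def FUnstable (Γ : Conn n m) : Prop :=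
  ∃ B : Conn n m, Smooth B ∧ HasCompactSupport B ∧ SkewVals B ∧
    ∀ (σ : ℝ) (V : Fin n → ℝ), Q Γ σ V B < 0

/-- Joint smoothness (entrywise) of a one-parameter family of connections on a
time set `S`. -/
def SmoothFamilyOn (Γt : ℝ → Conn n m) (S : Set ℝ) : Prop :=
  ∀ (k : Fin n) (a b : Fin m),
    ContDiffOn ℝ (⊤ : ℕ∞) (fun p : ℝ × (Fin n → ℝ) => Γt p.1 p.2 k a b)
      (S ×ˢ (Set.univ : Set (Fin n → ℝ)))

/-- Yang–Mills flow: `∂ₜ(Γ_t)ₖ = Σᵢ ∇ᵢ(F_t)_{ik}` on a time set `S`. -/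
def YMFlowOn (Γt : ℝ → Conn n m) (S : Set ℝ) : Prop :=
  ∀ t ∈ S, ∀ (x : Fin n → ℝ) (k : Fin n) (a b : Fin m),
    HasDerivWithinAt (fun t' => Γt t' x k a b)
      ((∑ i, covDer (Γt t) i (fun y => curv (Γt t) i k y) x) a b) S t

/-- Locally uniform in time polynomial curvature growth to order two. -/
def PolyCurvGrowth2On (Γt : ℝ → Conn n m) (S : Set ℝ) : Prop :=
  ∀ J : Set ℝ, IsCompact J → J ⊆ S →
    ∃ p : Polynomial ℝ, ∀ t ∈ J, ∀ x,
      normF (Γt t) x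
        + (∑ i, ∑ j, ∑ k,
            frobNorm (covDer (Γt t) i (fun y => curv (Γt t) j k y) x))
        + (∑ i, ∑ j, ∑ k, ∑ l,
            frobNorm (covDer (Γt t) i
              (fun y => covDer (Γt t) j (fun z => curv (Γt t) k l z) y) x))
        ≤ p.eval (enorm x)

end YM

/-- **The Gastel shrinker profile** (from §6): for `5 ≤ n ≤ 9`, with
`a = √((n−2)/8)` and `b = 3(n−2) − (1/√2)(n+2)√(n−2)`, one has `b ≥ 0`, the
function `η(r,t) = r²/(a r² − b t)` solves the equivariant Yang–Mills flow
equation `η_t = η_rr + (n−3)η_r/r − (n−2)η(η−1)(η−2)/r²` for `r > 0`, `t < 0`,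
and `η` is self-similar: `η(r,t) = η(r/√(−t), −1)`. -/
theorem gastel_profile (n : ℕ) (hn5 : 5 ≤ n) (hn9 : n ≤ 9)
    (a b : ℝ) (ha : a = Real.sqrt (((n : ℝ) - 2) / 8))
    (hb : b = 3 * ((n : ℝ) - 2)
      - (1 / Real.sqrt 2) * ((n : ℝ) + 2) * Real.sqrt ((n : ℝ) - 2))
    (η : ℝ → ℝ → ℝ)
    (hη : ∀ r t : ℝ, η r t = r ^ 2 / (a * r ^ 2 - b * t)) :
    0 ≤ b ∧
    (∀ r t : ℝ, 0 < r → t < 0 →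
      deriv (fun s => η r s) t
        = deriv (fun u => deriv (fun u' => η u' t) u) r
          + ((n : ℝ) - 3) * deriv (fun u => η u t) r / r
          - ((n : ℝ) - 2) * (η r t * (η r t - 1) * (η r t - 2)) / r ^ 2) ∧
    (∀ r t : ℝ, 0 < r → t < 0 → η r t = η (r / Real.sqrt (-t)) (-1)) := by
  have hN5 : (5:ℝ) ≤ (n:ℝ) := by exact_mod_cast hn5
  have hN9 : (n:ℝ) ≤ 9 := by exact_mod_cast hn9
  have ha2 : a ^ 2 = ((n:ℝ) - 2) / 8 := by
    rw [ha]; exact Real.sq_sqrt (by linarith)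
  have ha0 : 0 < a := by
    rw [ha]; exact Real.sqrt_pos.mpr (by linarith)
  have haL : 1/2 < a := by nlinarith
  have haU : a < 1 := by nlinarith
  have hc : (n:ℝ) - 2 = 8 * a ^ 2 := by linarith
  have hsqrt : Real.sqrt ((n:ℝ) - 2) = Real.sqrt 8 * a := by
    rw [ha, ← Real.sqrt_mul (by norm_num : (0:ℝ) ≤ 8),
      show (8:ℝ) * (((n:ℝ) - 2)/8) = (n:ℝ) - 2 by ring]
  have h8 : Real.sqrt 8 = 2 * Real.sqrt 2 := by
    rw [show (8:ℝ) = 2^2 * 2 by norm_num,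
      Real.sqrt_mul (by positivity), Real.sqrt_sq (by norm_num)]
  have hs2 : Real.sqrt 2 ≠ 0 := by positivity
  have hb' : b = 3 * ((n:ℝ) - 2) - 2 * a * ((n:ℝ) + 2) := by
    rw [hb, hsqrt, h8]; field_simp
  have hbv : b = 8 * a * ((2*a - 1) * (1 - a)) := by
    rw [hb', show (n:ℝ) + 2 = ((n:ℝ) - 2) + 4 by ring, hc]; ring
  have hbpos : 0 < b := by
    rw [hbv]
    have h1 : (0:ℝ) < 2*a - 1 := by linarith
    have h2 : (0:ℝ) < 1 - a := by linarith
    positivity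
  refine ⟨hbpos.le, ?_, ?_⟩
  · intro r t hr ht
    have hnt : 0 < -t := by linarith
    have hDu : ∀ u : ℝ, a * u ^ 2 - b * t ≠ 0 := by
      intro u
      have : 0 < a * u ^ 2 - b * t := by
        nlinarith [mul_nonneg ha0.le (sq_nonneg u), mul_pos hbpos hnt]
      exact this.ne'
    have hD := hDu r
    -- time derivative
    have hT : HasDerivAt (fun s => η r s)
        ((0 * (a * r ^ 2 - b * t) - r ^ 2 * (-b)) / (a * r ^ 2 - b * t) ^ 2) t := by
      have he : (fun s => η r s) = fun s => r ^ 2 / (a * r ^ 2 - b * s) :=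
        funext fun s => hη r s
      rw [he]
      have hg : HasDerivAt (fun s : ℝ => a * r ^ 2 - b * s) (-b) t := by
        have := HasDerivAt.const_sub (a * r ^ 2) ((hasDerivAt_id t).const_mul b)
        simpa using this
      exact (hasDerivAt_const t (r ^ 2)).div hg hD
    -- radial derivative (at every point)
    have hR : ∀ u : ℝ, HasDerivAt (fun u' => η u' t)
        ((2 * u * (a * u ^ 2 - b * t) - u ^ 2 * (2 * a * u)) / (a * u ^ 2 - b * t) ^ 2) u := by
      intro u
      have he : (fun u' => η u' t) = fun u' => u' ^ 2 / (a * u' ^ 2 - b * t) :=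
        funext fun u' => hη u' t
      rw [he]
      have h1 : HasDerivAt (fun x : ℝ => x ^ 2) (2 * u) u := by
        simpa using hasDerivAt_pow 2 u
      have h2 : HasDerivAt (fun x : ℝ => a * x ^ 2 - b * t) (2 * a * u) u := by
        have := (h1.const_mul a).sub_const (b * t)
        exact this.congr_deriv (by ring)
      exact h1.div h2 (hDu u)
    have hderiv_r : (fun u => deriv (fun u' => η u' t) u)
        = fun u => (-(2 * b * t) * u) / (a * u ^ 2 - b * t) ^ 2 := by
      funext u
      rw [(hR u).deriv,
        show 2 * u * (a * u ^ 2 - b * t) - u ^ 2 * (2 * a * u) = -(2 * b * t) * u from by ring]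
    -- second radial derivative
    have hRR : HasDerivAt (fun u => (-(2 * b * t) * u) / (a * u ^ 2 - b * t) ^ 2)
        ((-(2 * b * t) * 1 * (a * r ^ 2 - b * t) ^ 2
            - (-(2 * b * t) * r) * (2 * (a * r ^ 2 - b * t) * (2 * a * r)))
          / ((a * r ^ 2 - b * t) ^ 2) ^ 2) r := by
      have h1 : HasDerivAt (fun x : ℝ => x ^ 2) (2 * r) r := by
        simpa using hasDerivAt_pow 2 r
      have h2 : HasDerivAt (fun x : ℝ => a * x ^ 2 - b * t) (2 * a * r) r := by
        have := (h1.const_mul a).sub_const (b * t)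
        exact this.congr_deriv (by ring)
      have h3 : HasDerivAt (fun x : ℝ => (a * x ^ 2 - b * t) ^ 2)
          (2 * (a * r ^ 2 - b * t) * (2 * a * r)) r := by
        have := h2.pow 2
        exact this.congr_deriv (by push_cast; ring)
      have h0 : HasDerivAt (fun x : ℝ => -(2 * b * t) * x) (-(2 * b * t) * 1) r :=
        (hasDerivAt_id r).const_mul (-(2 * b * t))
      exact h0.div h3 (pow_ne_zero 2 (hDu r))
    have e1 := hT.deriv
    have e2 : deriv (fun u => η u t) r
        = (-(2 * b * t) * r) / (a * r ^ 2 - b * t) ^ 2 := by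
      rw [(hR r).deriv,
        show 2 * r * (a * r ^ 2 - b * t) - r ^ 2 * (2 * a * r) = -(2 * b * t) * r from by ring]
    have e3 : deriv (fun u => deriv (fun u' => η u' t) u) r
        = (-(2 * b * t) * 1 * (a * r ^ 2 - b * t) ^ 2
            - (-(2 * b * t) * r) * (2 * (a * r ^ 2 - b * t) * (2 * a * r)))
          / ((a * r ^ 2 - b * t) ^ 2) ^ 2 := by
      rw [hderiv_r]; exact hRR.deriv
    rw [e1, e2, e3, hη r t]
    have hc3 : (n:ℝ) - 3 = 8 * a ^ 2 - 1 := by linarith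
    rw [hc, hc3]
    field_simp
    rw [hbv]
    ring
  · intro r t hr ht
    have hnt : 0 < -t := by linarith
    have hst : Real.sqrt (-t) ^ 2 = -t := Real.sq_sqrt hnt.le
    rw [hη, hη, div_pow, hst]
    have hD1 : a * r ^ 2 - b * t ≠ 0 := by
      have : 0 < a * r ^ 2 - b * t := by
        nlinarith [mul_pos ha0 (pow_pos hr 2), mul_pos hbpos hnt]
      exact this.ne'
    have hD2 : a * (r ^ 2 / -t) - b * (-1) ≠ 0 := by
      have h1 : 0 < r ^ 2 / -t := div_pos (pow_pos hr 2) hnt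
      have : 0 < a * (r ^ 2 / -t) - b * (-1) := by nlinarith [mul_pos ha0 h1]
      exact this.ne'
    rw [div_eq_div_iff hD1 hD2]
    field_simp [ht.ne]
    ring
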